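/- Let H be a complex separable infinite-dimensional Hilbert space and let E ⊆ c₀ be a Banach symmetric sequence space with the Fatou property such that E ≠ ℓ₂. Then every surjective 2-local isometry V of the Banach symmetric ideal C_E is a (complex-)linear surjective isometry of C_E. -/

import Mathlib

/-! A 2-local isometry `V` of `C_E` is complex homogeneous (compare it with the linear isometry
that agrees with it at `x` and at `c • x`) and preserves distances
`‖V x - V y‖_{C_E} = ‖x - y‖_{C_E}`. Väisälä's proof of the Mazur–Ulam theorem uses the triangle
inequality only through a uniform bound, so it works verbatim for the quasi-triangle inequality
`‖x + y‖_{C_E} ≤ 2 (‖x‖_{C_E} + ‖y‖_{C_E})`, which follows from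
`s_n(x + y) ≤ s_{n/2}(x) + s_{n/2}(y)`. Hence `V` maps midpoints to midpoints, and together with
homogeneity this makes it additive. -/

open scoped InnerProductSpace
open Filter Topology

noncomputable section

/-- The non-increasing rearrangement `x*` of a bounded real sequence:
`x*_n = inf_{|F| ≤ n} sup_{k ∉ F} |x k|`. -/
noncomputable def decRearrange (x : ℕ → ℝ) (n : ℕ) : ℝ :=
  sInf {c : ℝ | ∃ F : Finset ℕ, F.card ≤ n ∧ ∀ k ∉ F, |x k| ≤ c}

/-- A Banach symmetric sequence space: a nonzero linear subspace of `ℓ∞` (real bounded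
sequences) equipped with a complete norm such that `x* ≤ y*` pointwise and `y ∈ E` imply
`x ∈ E` with `‖x‖_E ≤ ‖y‖_E`. -/
structure BanachSymmSeqSpace where
  carrier : Set (ℕ → ℝ)
  bdd : ∀ x ∈ carrier, ∃ C : ℝ, ∀ n, |x n| ≤ C
  zero_mem : (0 : ℕ → ℝ) ∈ carrier
  add_mem : ∀ x ∈ carrier, ∀ y ∈ carrier, x + y ∈ carrier
  smul_mem : ∀ (c : ℝ), ∀ x ∈ carrier, c • x ∈ carrier
  nontrivial : ∃ x ∈ carrier, x ≠ 0
  nrm : (ℕ → ℝ) → ℝ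
  nrm_zero : nrm 0 = 0
  nrm_pos : ∀ x ∈ carrier, x ≠ 0 → 0 < nrm x
  nrm_smul : ∀ (c : ℝ), ∀ x ∈ carrier, nrm (c • x) = |c| * nrm x
  nrm_triangle : ∀ x ∈ carrier, ∀ y ∈ carrier, nrm (x + y) ≤ nrm x + nrm y
  complete : ∀ u : ℕ → ℕ → ℝ, (∀ n, u n ∈ carrier) →
    (∀ ε : ℝ, 0 < ε → ∃ N, ∀ m ≥ N, ∀ k ≥ N, nrm (u m - u k) < ε) →
    ∃ x ∈ carrier, ∀ ε : ℝ, 0 < ε → ∃ N, ∀ m ≥ N, nrm (u m - x) < ε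
  symmetric : ∀ x : ℕ → ℝ, ∀ y ∈ carrier, (∃ C : ℝ, ∀ n, |x n| ≤ C) →
    (∀ n, decRearrange x n ≤ decRearrange y n) → x ∈ carrier ∧ nrm x ≤ nrm y

/-- `E ⊆ c₀`: every element of `E` tends to zero. -/
def BanachSymmSeqSpace.SubsetC0 (S : BanachSymmSeqSpace) : Prop :=
  ∀ x ∈ S.carrier, Filter.Tendsto x Filter.atTop (nhds 0)

/-- The Fatou property of a Banach symmetric sequence space. -/
def BanachSymmSeqSpace.Fatou (S : BanachSymmSeqSpace) : Prop :=
  ∀ a : ℕ → ℕ → ℝ, (∀ k, a k ∈ S.carrier) → (∀ k n, 0 ≤ a k n) →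
    (∀ k n, a k n ≤ a (k + 1) n) → (∃ C : ℝ, ∀ k, S.nrm (a k) ≤ C) →
    ∃ b ∈ S.carrier, (∀ n, IsLUB {r : ℝ | ∃ k, r = a k n} (b n)) ∧
      IsLUB {r : ℝ | ∃ k, r = S.nrm (a k)} (S.nrm b)

/-- `E = ℓ₂` as a set of sequences. -/
def ellTwo : Set (ℕ → ℝ) := {x : ℕ → ℝ | Summable fun n => (x n) ^ 2}

section OperatorIdeal

variable {H : Type*} [NormedAddCommGroup H] [InnerProductSpace ℂ H] [CompleteSpace H]

/-- The `n`-th singular value (approximation number) of an operator: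
`s_n(x) = inf { ‖x - F‖ : rank F ≤ n }` (so `s_0(x) = ‖x‖`). For compact operators this is
the `n`-th eigenvalue (in decreasing order) of `(x*x)^{1/2}`. -/
noncomputable def singVal (x : H →L[ℂ] H) (n : ℕ) : ℝ :=
  sInf {c : ℝ | ∃ F : H →L[ℂ] H, FiniteDimensional ℂ (LinearMap.range (F : H →ₗ[ℂ] H)) ∧
    Module.finrank ℂ (LinearMap.range (F : H →ₗ[ℂ] H)) ≤ n ∧ ‖x - F‖ = c}

/-- The Banach symmetric ideal `C_E` of compact operators whose singular value sequence
belongs to `E`. -/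
def CE (S : BanachSymmSeqSpace) : Set (H →L[ℂ] H) :=
  {x | IsCompactOperator (⇑x) ∧ (fun n => singVal x n) ∈ S.carrier}

/-- The norm `‖x‖_{C_E} = ‖{s_n(x)}‖_E` of the Banach symmetric ideal `C_E`. -/
noncomputable def CEnorm (S : BanachSymmSeqSpace) (x : H →L[ℂ] H) : ℝ :=
  S.nrm (fun n => singVal x n)

/-- A trace class operator: a compact operator with summable singular values. -/
def IsTraceClass (z : H →L[ℂ] H) : Prop :=
  IsCompactOperator (⇑z) ∧ Summable fun n => singVal z n

/-- The Köthe dual `C_E^× = { y ∈ B(H) : x y is trace class for every x ∈ C_E }`. -/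
def KDual (S : BanachSymmSeqSpace) : Set (H →L[ℂ] H) :=
  {y : H →L[ℂ] H | ∀ x ∈ CE (H := H) S, IsTraceClass (x * y)}

/-- The trace of an operator computed with respect to a Hilbert basis `b`:
`tr z = Σ_i ⟪b i, z (b i)⟫` (basis independent for trace class operators). -/
noncomputable def traceB (b : HilbertBasis ℕ ℂ H) (z : H →L[ℂ] H) : ℂ :=
  ∑' i, ⟪b i, z (b i)⟫_ℂ

/-- The weak topology `σ(C_E, C_E^×)` on `C_E`, generated by the functionals
`x ↦ tr (x y)`, `y ∈ C_E^×`. -/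
noncomputable def sigmaTop (S : BanachSymmSeqSpace) (b : HilbertBasis ℕ ℂ H) :
    TopologicalSpace {x : H →L[ℂ] H // x ∈ CE (H := H) S} :=
  ⨅ y : {y : H →L[ℂ] H // y ∈ KDual (H := H) S},
    TopologicalSpace.induced (fun x => traceB b (x.1 * y.1)) inferInstance

/-- The ball topology `b_{C_E}`: the coarsest topology in which every closed norm ball
of `(C_E, ‖·‖_{C_E})` is closed. -/
noncomputable def ballTop (S : BanachSymmSeqSpace) :
    TopologicalSpace {x : H →L[ℂ] H // x ∈ CE (H := H) S} :=
  TopologicalSpace.generateFrom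
    {s | ∃ (c : {x : H →L[ℂ] H // x ∈ CE (H := H) S}) (ε : ℝ), 0 < ε ∧
      s = {y : {x : H →L[ℂ] H // x ∈ CE (H := H) S} | CEnorm S (y.1 - c.1) ≤ ε}ᶜ}

/-- `W` is a surjective (complex-)linear isometry of the Banach symmetric ideal `C_E`. -/
def SurjLinearIsomOn (S : BanachSymmSeqSpace) (W : (H →L[ℂ] H) → (H →L[ℂ] H)) : Prop :=
  (∀ x ∈ CE (H := H) S, W x ∈ CE (H := H) S) ∧
  (∀ y ∈ CE (H := H) S, ∃ x ∈ CE (H := H) S, W x = y) ∧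
  (∀ x ∈ CE (H := H) S, ∀ y ∈ CE (H := H) S, W (x + y) = W x + W y) ∧
  (∀ (c : ℂ), ∀ x ∈ CE (H := H) S, W (c • x) = c • W x) ∧
  (∀ x ∈ CE (H := H) S, CEnorm S (W x) = CEnorm S x)

end OperatorIdeal

end

open Function Module

section QuasiNorm

variable {M : Type*} [AddCommGroup M] [Module ℝ M]

structure IsQuasiNorm (N : M → ℝ) (K : ℝ) : Prop where
  nonneg : ∀ x, 0 ≤ N x
  eq_zero : ∀ {x}, N x = 0 → x = 0
  smul : ∀ (c : ℝ) x, N (c • x) = |c| * N x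
  add_le : ∀ x y, N (x + y) ≤ K * (N x + N y)

namespace IsQuasiNorm

variable {N : M → ℝ} {K : ℝ}

lemma neg (hN : IsQuasiNorm N K) (x : M) : N (-x) = N x := by
  simpa using hN.smul (-1) x

lemma sub_comm (hN : IsQuasiNorm N K) (x y : M) : N (x - y) = N (y - x) := by
  rw [← neg_sub, hN.neg]

lemma pointReflection_sub_pointReflection (hN : IsQuasiNorm N K) (z u v : M) :
    N (Equiv.pointReflection z u - Equiv.pointReflection z v) = N (u - v) := by
  rw [Equiv.pointReflection_apply, Equiv.pointReflection_apply, hN.sub_comm]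
  simp only [vsub_eq_sub, vadd_eq_add]
  congr 1
  abel

lemma pointReflection_sub_self (hN : IsQuasiNorm N K) (z u : M) :
    N (Equiv.pointReflection z u - u) = 2 * N (z - u) := by
  have : Equiv.pointReflection z u - u = (2 : ℝ) • (z - u) := by
    rw [Equiv.pointReflection_apply, vsub_eq_sub, vadd_eq_add, two_smul]
    abel
  rw [this, hN.smul, abs_two]

/-- Väisälä's doubling argument: conjugating by the reflection in the midpoint doubles the
displacement of the midpoint, which is bounded a priori. -/
lemma two_pow_mul_le_of_fixes (hN : IsQuasiNorm N K) (a b : M) (n : ℕ) :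
    ∀ g : M ≃ M, (∀ x y, N (g x - g y) = N (x - y)) → g a = a → g b = b →
      2 ^ n * N (g (midpoint ℝ a b) - midpoint ℝ a b) ≤ 2 * K * N (midpoint ℝ a b - a) := by
  set z := midpoint ℝ a b
  induction n with
  | zero =>
    intro g hg ha _
    calc 2 ^ 0 * N (g z - z) = N ((g z - g a) + (a - z)) := by rw [ha]; simp
      _ ≤ K * (N (g z - g a) + N (a - z)) := hN.add_le _ _
      _ = 2 * K * N (z - a) := by rw [hg, hN.sub_comm a]; ring
  | succ n ih =>
    intro g hg ha hb
    set R := Equiv.pointReflection z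
    have hR : ∀ x y, N (R x - R y) = N (x - y) := hN.pointReflection_sub_pointReflection z
    have hRa : R a = b := Equiv.pointReflection_midpoint_left a b
    have hRb : R b = a := Equiv.pointReflection_midpoint_right a b
    set g' := ((g.trans R).trans g.symm).trans R
    have hg' : ∀ x y, N (g' x - g' y) = N (x - y) := by
      intro x y
      simp only [g', Equiv.trans_apply]
      rw [hR, ← hg, Equiv.apply_symm_apply, Equiv.apply_symm_apply, hR, hg]
    have hga : g.symm a = a := g.symm_apply_eq.2 ha.symm
    have hgb : g.symm b = b := g.symm_apply_eq.2 hb.symm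
    have hdouble : N (g' z - z) = 2 * N (g z - z) := by
      calc N (R (g.symm (R (g z))) - z) = N (R (g.symm (R (g z))) - R z) := by
            rw [Equiv.pointReflection_self]
        _ = N (g (g.symm (R (g z))) - g z) := by rw [hR, hg]
        _ = 2 * N (g z - z) := by
            rw [Equiv.apply_symm_apply, hN.pointReflection_sub_self, hN.sub_comm]
    have hbound := ih g' hg' (by simp [g', ha, hRa, hgb, hRb]) (by simp [g', hb, hRb, hga, hRa])
    rw [hdouble] at hbound
    calc 2 ^ (n + 1) * N (g z - z) = 2 ^ n * (2 * N (g z - z)) := by ring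
      _ ≤ _ := hbound

lemma apply_midpoint_of_fixes (hN : IsQuasiNorm N K) {a b : M} (g : M ≃ M)
    (hg : ∀ x y, N (g x - g y) = N (x - y)) (ha : g a = a) (hb : g b = b) :
    g (midpoint ℝ a b) = midpoint ℝ a b := by
  set d := N (g (midpoint ℝ a b) - midpoint ℝ a b)
  suffices d = 0 from sub_eq_zero.1 (hN.eq_zero this)
  by_contra hd
  have hpos : 0 < d := (hN.nonneg _).lt_of_ne' hd
  obtain ⟨n, hn⟩ := pow_unbounded_of_one_lt (2 * K * N (midpoint ℝ a b - a) / d) one_lt_two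
  have hbound := hN.two_pow_mul_le_of_fixes a b n g hg ha hb
  rw [div_lt_iff₀ hpos] at hn
  linarith

lemma map_midpoint (hN : IsQuasiNorm N K) (f : M ≃ M)
    (hf : ∀ x y, N (f x - f y) = N (x - y)) (a b : M) :
    f (midpoint ℝ a b) = midpoint ℝ (f a) (f b) := by
  set R := Equiv.pointReflection (midpoint ℝ (f a) (f b))
  set g := ((f.trans R).trans f.symm).trans (Equiv.pointReflection (midpoint ℝ a b))
  have hg : ∀ x y, N (g x - g y) = N (x - y) := by
    intro x y
    simp only [g, Equiv.trans_apply]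
    rw [hN.pointReflection_sub_pointReflection, ← hf, Equiv.apply_symm_apply,
      Equiv.apply_symm_apply, hN.pointReflection_sub_pointReflection, hf]
  have hfix := hN.apply_midpoint_of_fixes g hg (a := a) (b := b) (by simp [g, R])
    (by simp [g, R])
  -- so `f (midpoint ℝ a b)` is fixed by the reflection in `midpoint ℝ (f a) (f b)`
  simp only [g, Equiv.trans_apply] at hfix
  rw [← Equiv.eq_symm_apply, Equiv.pointReflection_symm, Equiv.pointReflection_self,
    Equiv.symm_apply_eq, ← AffineEquiv.coe_pointReflection ℝ,
    AffineEquiv.pointReflection_fixed_iff_of_module] at hfix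
  exact hfix

lemma map_add_of_isometry (hN : IsQuasiNorm N K) (f : M → M) (hsurj : Surjective f)
    (hf : ∀ x y, N (f x - f y) = N (x - y)) (htwo : ∀ x, f ((2 : ℝ) • x) = (2 : ℝ) • f x)
    (x y : M) : f (x + y) = f x + f y := by
  have hinj : Injective f := fun x y h =>
    sub_eq_zero.1 (hN.eq_zero (by rw [← hf, h, sub_self, ← zero_smul ℝ (0 : M), hN.smul]; simp))
  have hmid : f (midpoint ℝ x y) = midpoint ℝ (f x) (f y) :=
    hN.map_midpoint (Equiv.ofBijective f ⟨hinj, hsurj⟩) hf x y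
  rw [← midpoint_add_self ℝ x y, ← two_smul ℝ, htwo, hmid, two_smul, midpoint_add_self]

end IsQuasiNorm

end QuasiNorm

section SingularValues

variable {H : Type*} [NormedAddCommGroup H] [InnerProductSpace ℂ H]

lemma finiteDimensional_range_zero_and_finrank_le (n : ℕ) :
    FiniteDimensional ℂ (LinearMap.range ((0 : H →L[ℂ] H) : H →ₗ[ℂ] H)) ∧
      finrank ℂ (LinearMap.range ((0 : H →L[ℂ] H) : H →ₗ[ℂ] H)) ≤ n := by
  rw [ContinuousLinearMap.toLinearMap_zero, LinearMap.range_zero, finrank_bot]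
  exact ⟨inferInstance, n.zero_le⟩

lemma singVal_set_nonempty (x : H →L[ℂ] H) (n : ℕ) :
    {c : ℝ | ∃ F : H →L[ℂ] H, FiniteDimensional ℂ (LinearMap.range (F : H →ₗ[ℂ] H)) ∧
      finrank ℂ (LinearMap.range (F : H →ₗ[ℂ] H)) ≤ n ∧ ‖x - F‖ = c}.Nonempty :=
  ⟨_, 0, (finiteDimensional_range_zero_and_finrank_le n).1,
    (finiteDimensional_range_zero_and_finrank_le n).2, rfl⟩

lemma singVal_le_norm_sub {x F : H →L[ℂ] H} {n : ℕ}
    (hfin : FiniteDimensional ℂ (LinearMap.range (F : H →ₗ[ℂ] H)))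
    (hrank : finrank ℂ (LinearMap.range (F : H →ₗ[ℂ] H)) ≤ n) : singVal x n ≤ ‖x - F‖ :=
  csInf_le ⟨0, by rintro _ ⟨G, -, -, rfl⟩; exact norm_nonneg _⟩ ⟨F, hfin, hrank, rfl⟩

lemma singVal_nonneg (x : H →L[ℂ] H) (n : ℕ) : 0 ≤ singVal x n :=
  Real.sInf_nonneg (by rintro _ ⟨F, -, -, rfl⟩; exact norm_nonneg _)

lemma singVal_le_norm (x : H →L[ℂ] H) (n : ℕ) : singVal x n ≤ ‖x‖ := by
  simpa using singVal_le_norm_sub (x := x) (finiteDimensional_range_zero_and_finrank_le n).1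
    (finiteDimensional_range_zero_and_finrank_le n).2

lemma singVal_zero_left (n : ℕ) : singVal (0 : H →L[ℂ] H) n = 0 :=
  le_antisymm (by simpa using singVal_le_norm (0 : H →L[ℂ] H) n) (singVal_nonneg 0 n)

lemma singVal_zero_right (x : H →L[ℂ] H) : singVal x 0 = ‖x‖ := by
  refine le_antisymm (singVal_le_norm x 0) (le_csInf (singVal_set_nonempty x 0) ?_)
  rintro _ ⟨F, hfin, hrank, rfl⟩
  have hF : F = 0 := by
    have : LinearMap.range (F : H →ₗ[ℂ] H) = ⊥ := Submodule.finrank_eq_zero.1 (Nat.le_zero.1 hrank)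
    exact ContinuousLinearMap.coe_injective (LinearMap.range_eq_bot.1 this)
  simp [hF]

lemma singVal_antitone (x : H →L[ℂ] H) : Antitone (singVal x) := by
  intro m n hmn
  refine le_csInf (singVal_set_nonempty x m) ?_
  rintro _ ⟨F, hfin, hrank, rfl⟩
  exact singVal_le_norm_sub hfin (hrank.trans hmn)

lemma singVal_smul_le (c : ℂ) (x : H →L[ℂ] H) (n : ℕ) :
    singVal (c • x) n ≤ ‖c‖ * singVal x n := by
  rcases eq_or_ne c 0 with rfl | hc
  · simp [singVal_zero_left]
  have hc' : 0 < ‖c‖ := norm_pos_iff.2 hc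
  rw [← div_le_iff₀' hc']
  refine le_csInf (singVal_set_nonempty x n) ?_
  rintro _ ⟨F, hfin, hrank, rfl⟩
  rw [div_le_iff₀' hc', ← norm_smul, smul_sub]
  have hrange : LinearMap.range ((c • F : H →L[ℂ] H) : H →ₗ[ℂ] H) =
      LinearMap.range (F : H →ₗ[ℂ] H) := LinearMap.range_smul _ c hc
  exact singVal_le_norm_sub (hrange ▸ hfin) (hrange ▸ hrank)

lemma singVal_smul (c : ℂ) (x : H →L[ℂ] H) (n : ℕ) :
    singVal (c • x) n = ‖c‖ * singVal x n := by
  rcases eq_or_ne c 0 with rfl | hc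
  · simp [singVal_zero_left]
  refine le_antisymm (singVal_smul_le c x n) ?_
  have h := singVal_smul_le c⁻¹ (c • x) n
  rw [smul_smul, inv_mul_cancel₀ hc, one_smul, norm_inv] at h
  exact (le_inv_mul_iff₀ (norm_pos_iff.2 hc)).1 h

lemma singVal_add_le (x y : H →L[ℂ] H) (m n : ℕ) :
    singVal (x + y) (m + n) ≤ singVal x m + singVal y n := by
  rw [← sub_le_iff_le_add]
  refine le_csInf (singVal_set_nonempty x m) ?_
  rintro _ ⟨F, hFfin, hFrank, rfl⟩
  rw [sub_le_iff_le_add', ← sub_le_iff_le_add]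
  refine le_csInf (singVal_set_nonempty y n) ?_
  rintro _ ⟨G, hGfin, hGrank, rfl⟩
  rw [sub_le_iff_le_add']
  have hle := LinearMap.range_add_le (F : H →ₗ[ℂ] H) (G : H →ₗ[ℂ] H)
  have hfin : FiniteDimensional ℂ (LinearMap.range ((F + G : H →L[ℂ] H) : H →ₗ[ℂ] H)) :=
    Submodule.finiteDimensional_of_le hle
  have hrank : finrank ℂ (LinearMap.range ((F + G : H →L[ℂ] H) : H →ₗ[ℂ] H)) ≤ m + n :=
    (Submodule.finrank_mono hle).trans
      ((Submodule.finrank_add_le_finrank_add_finrank _ _).trans (add_le_add hFrank hGrank))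
  calc singVal (x + y) (m + n) ≤ ‖(x + y) - (F + G)‖ := singVal_le_norm_sub hfin hrank
    _ = ‖(x - F) + (y - G)‖ := by rw [add_sub_add_comm]
    _ ≤ ‖x - F‖ + ‖y - G‖ := norm_add_le _ _

end SingularValues

section SymmetricSequenceSpaces

lemma decRearrange_le {x : ℕ → ℝ} {n : ℕ} {c : ℝ} (F : Finset ℕ) (hF : F.card ≤ n)
    (hx : ∀ k ∉ F, |x k| ≤ c) : decRearrange x n ≤ c := by
  refine csInf_le ⟨0, ?_⟩ ⟨F, hF, hx⟩
  rintro c ⟨G, -, hG⟩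
  obtain ⟨k, hk⟩ := G.exists_notMem
  exact (abs_nonneg _).trans (hG k hk)

lemma decRearrange_of_antitone {a : ℕ → ℝ} (ha : Antitone a) (ha0 : 0 ≤ a) :
    decRearrange a = a := by
  funext n
  have habs : ∀ k, |a k| = a k := fun k => abs_of_nonneg (ha0 k)
  refine le_antisymm (decRearrange_le (Finset.range n) (by simp) fun k hk => ?_) ?_
  · rw [habs]
    exact ha (by simpa using hk)
  · refine le_csInf ⟨a 0, Finset.range n, by simp, fun k _ => by rw [habs]; exact ha k.zero_le⟩ ?_
    rintro c ⟨F, hF, hc⟩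
    -- pigeonhole: `F` cannot contain all of `0, …, n`
    obtain ⟨k, hk, hkF⟩ : ∃ k ∈ Finset.range (n + 1), k ∉ F :=
      Finset.exists_mem_notMem_of_card_lt_card (by simp; omega)
    calc a n ≤ a k := ha (Finset.mem_range_succ_iff.1 hk)
      _ = |a k| := (habs k).symm
      _ ≤ c := hc k hkF

namespace BanachSymmSeqSpace

variable (S : BanachSymmSeqSpace)

lemma nrm_nonneg {a : ℕ → ℝ} (ha : a ∈ S.carrier) : 0 ≤ S.nrm a := by
  have h := S.nrm_triangle a ha _ (S.smul_mem (-1) a ha)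
  rw [S.nrm_smul (-1) a ha, neg_one_smul, add_neg_cancel, S.nrm_zero] at h
  simpa using h

lemma mem_and_nrm_le_of_le {a b : ℕ → ℝ} (hb : b ∈ S.carrier) (ha : Antitone a) (ha0 : 0 ≤ a)
    (hb' : Antitone b) (hb0 : 0 ≤ b) (hab : a ≤ b) : a ∈ S.carrier ∧ S.nrm a ≤ S.nrm b :=
  S.symmetric a b hb ⟨a 0, fun n => (abs_of_nonneg (ha0 n)).trans_le (ha n.zero_le)⟩
    (by rwa [decRearrange_of_antitone ha ha0, decRearrange_of_antitone hb' hb0])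

def parityPart (r : ℕ) (a : ℕ → ℝ) (k : ℕ) : ℝ := if k % 2 = r then a (k / 2) else 0

lemma parityPart_mem_and_nrm_le {a : ℕ → ℝ} (ha : a ∈ S.carrier) (hanti : Antitone a) (ha0 : 0 ≤ a)
    (r : ℕ) : parityPart r a ∈ S.carrier ∧ S.nrm (parityPart r a) ≤ S.nrm a := by
  have habs : ∀ k, |parityPart r a k| ≤ a (k / 2) := fun k => by
    unfold parityPart
    split_ifs
    · exact (abs_of_nonneg (ha0 _)).le
    · simpa using ha0 _
  refine S.symmetric _ a ha ⟨a 0, fun k => (habs k).trans (hanti (k / 2).zero_le)⟩ fun n => ?_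
  rw [decRearrange_of_antitone hanti ha0]
  refine decRearrange_le ((Finset.range n).image (fun j => 2 * j + r))
    (Finset.card_image_le.trans (by simp)) ?_
  intro k hk
  by_cases hkr : k % 2 = r
  · refine (habs k).trans (hanti ?_)
    by_contra! hlt
    exact hk (Finset.mem_image.2 ⟨k / 2, Finset.mem_range.2 hlt, by omega⟩)
  · simpa [parityPart, hkr] using ha0 n

lemma stretch_mem_and_nrm_le {a : ℕ → ℝ} (ha : a ∈ S.carrier) (hanti : Antitone a) (ha0 : 0 ≤ a) :
    (fun k => a (k / 2)) ∈ S.carrier ∧ S.nrm (fun k => a (k / 2)) ≤ 2 * S.nrm a := by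
  have hsplit : (fun k => a (k / 2)) = parityPart 0 a + parityPart 1 a := by
    funext k
    rcases Nat.mod_two_eq_zero_or_one k with h | h <;> simp [parityPart, h]
  obtain ⟨h0, hn0⟩ := S.parityPart_mem_and_nrm_le ha hanti ha0 0
  obtain ⟨h1, hn1⟩ := S.parityPart_mem_and_nrm_le ha hanti ha0 1
  rw [hsplit]
  exact ⟨S.add_mem _ h0 _ h1, (S.nrm_triangle _ h0 _ h1).trans (by linarith)⟩

end BanachSymmSeqSpace

end SymmetricSequenceSpaces

section SymmetricIdeal

variable {H : Type*} [NormedAddCommGroup H] [InnerProductSpace ℂ H] (S : BanachSymmSeqSpace)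

lemma singVal_add_le_half (x y : H →L[ℂ] H) (n : ℕ) :
    singVal (x + y) n ≤ singVal x (n / 2) + singVal y (n / 2) :=
  calc singVal (x + y) n = singVal (x + y) (n / 2 + (n - n / 2)) := by congr 1; omega
    _ ≤ singVal x (n / 2) + singVal y (n - n / 2) := singVal_add_le x y _ _
    _ ≤ singVal x (n / 2) + singVal y (n / 2) := by
        gcongr; exact singVal_antitone y (by omega)

lemma zero_mem_CE : (0 : H →L[ℂ] H) ∈ CE S := by
  refine ⟨isCompactOperator_zero, ?_⟩
  convert S.zero_mem using 1
  exact funext singVal_zero_left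

lemma singVal_smul_eq (c : ℂ) (x : H →L[ℂ] H) : singVal (c • x) = ‖c‖ • singVal x :=
  funext (singVal_smul c x)

lemma smul_mem_CE (c : ℂ) {x : H →L[ℂ] H} (hx : x ∈ CE S) : c • x ∈ CE S :=
  ⟨by simpa using hx.1.smul c, (singVal_smul_eq c x).symm ▸ S.smul_mem _ _ hx.2⟩

lemma CEnorm_smul (c : ℂ) {x : H →L[ℂ] H} (hx : x ∈ CE S) :
    CEnorm S (c • x) = ‖c‖ * CEnorm S x := by
  rw [CEnorm, CEnorm, ← abs_norm c, ← S.nrm_smul _ _ hx.2]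
  exact congrArg S.nrm (singVal_smul_eq c x)

/-- `s_n(x + y)` is dominated by the stretched sequence `s_{n/2}(x) + s_{n/2}(y)`. -/
lemma add_mem_CE_and_CEnorm_add_le {x y : H →L[ℂ] H} (hx : x ∈ CE S) (hy : y ∈ CE S) :
    x + y ∈ CE S ∧ CEnorm S (x + y) ≤ 2 * (CEnorm S x + CEnorm S y) := by
  obtain ⟨hx', hnx⟩ := S.stretch_mem_and_nrm_le hx.2 (singVal_antitone x) (singVal_nonneg x)
  obtain ⟨hy', hny⟩ := S.stretch_mem_and_nrm_le hy.2 (singVal_antitone y) (singVal_nonneg y)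
  have hdom := S.mem_and_nrm_le_of_le (S.add_mem _ hx' _ hy') (singVal_antitone (x + y))
    (singVal_nonneg (x + y))
    (fun m n hmn => add_le_add (singVal_antitone x (Nat.div_le_div_right hmn))
      (singVal_antitone y (Nat.div_le_div_right hmn)))
    (fun n => add_nonneg (singVal_nonneg x _) (singVal_nonneg y _))
    (singVal_add_le_half x y)
  refine ⟨⟨by simpa using hx.1.add hy.1, hdom.1⟩, ?_⟩
  calc CEnorm S (x + y) ≤ _ := hdom.2
    _ ≤ _ := S.nrm_triangle _ hx' _ hy'
    _ ≤ 2 * (CEnorm S x + CEnorm S y) := by rw [CEnorm, CEnorm]; linarith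

lemma eq_zero_of_CEnorm_eq_zero {x : H →L[ℂ] H} (hx : x ∈ CE S) (h : CEnorm S x = 0) :
    x = 0 := by
  by_contra hne
  have hsv : (fun n => singVal x n) ≠ 0 := fun h0 =>
    hne (norm_eq_zero.1 (singVal_zero_right x ▸ congrFun h0 0))
  exact (S.nrm_pos _ hx.2 hsv).ne' h

def CEsubmodule : Submodule ℂ (H →L[ℂ] H) where
  carrier := CE S
  add_mem' hx hy := (add_mem_CE_and_CEnorm_add_le S hx hy).1
  zero_mem' := zero_mem_CE S
  smul_mem' c _ hx := smul_mem_CE S c hx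

lemma isQuasiNorm_CEnorm :
    IsQuasiNorm (fun x : CEsubmodule (H := H) S => CEnorm S (x : H →L[ℂ] H)) 2 where
  nonneg x := S.nrm_nonneg x.2.2
  eq_zero {x} hx := Subtype.ext (eq_zero_of_CEnorm_eq_zero S x.2 hx)
  smul c x := by
    have h := CEnorm_smul S (c : ℂ) (x := (x : H →L[ℂ] H)) x.2
    rwa [Complex.norm_real, Real.norm_eq_abs, Complex.coe_smul] at h
  add_le x y := (add_mem_CE_and_CEnorm_add_le S x.2 y.2).2

end SymmetricIdeal

lemma SurjLinearIsomOn.map_sub {H : Type*} [NormedAddCommGroup H] [InnerProductSpace ℂ H]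
    {S : BanachSymmSeqSpace} {W : (H →L[ℂ] H) → (H →L[ℂ] H)} (hW : SurjLinearIsomOn S W)
    {x y : H →L[ℂ] H} (hx : x ∈ CE S) (hy : y ∈ CE S) : W (x - y) = W x - W y := by
  rw [sub_eq_add_neg, ← neg_one_smul ℂ y, hW.2.2.1 x hx _ (smul_mem_CE S (-1) hy),
    hW.2.2.2.1 (-1) y hy, neg_one_smul, ← sub_eq_add_neg]

theorem two_local_isometry_is_linear_general
    {H : Type*} [NormedAddCommGroup H] [InnerProductSpace ℂ H]
    (S : BanachSymmSeqSpace)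
    (V : (H →L[ℂ] H) → (H →L[ℂ] H))
    (hVsurj : ∀ y ∈ CE (H := H) S, ∃ x ∈ CE (H := H) S, V x = y)
    (h2loc : ∀ x ∈ CE (H := H) S, ∀ y ∈ CE (H := H) S,
      ∃ W : (H →L[ℂ] H) → (H →L[ℂ] H), SurjLinearIsomOn S W ∧ V x = W x ∧ V y = W y) :
    SurjLinearIsomOn S V := by
  have hmap : ∀ x ∈ CE S, V x ∈ CE S := fun x hx => by
    obtain ⟨W, hW, hVx, -⟩ := h2loc x hx x hx
    exact hVx ▸ hW.1 x hx
  have hnorm : ∀ x ∈ CE S, CEnorm S (V x) = CEnorm S x := fun x hx => by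
    obtain ⟨W, hW, hVx, -⟩ := h2loc x hx x hx
    exact hVx ▸ hW.2.2.2.2 x hx
  have hsmul : ∀ (c : ℂ), ∀ x ∈ CE S, V (c • x) = c • V x := fun c x hx => by
    obtain ⟨W, hW, hVx, hVcx⟩ := h2loc x hx (c • x) (smul_mem_CE S c hx)
    rw [hVcx, hW.2.2.2.1 c x hx, hVx]
  have hdist : ∀ x ∈ CE S, ∀ y ∈ CE S, CEnorm S (V x - V y) = CEnorm S (x - y) :=
    fun x hx y hy => by
      obtain ⟨W, hW, hVx, hVy⟩ := h2loc x hx y hy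
      rw [hVx, hVy, ← hW.map_sub hx hy, hW.2.2.2.2 _ ((CEsubmodule (H := H) S).sub_mem hx hy)]
  let Vb : CEsubmodule (H := H) S → CEsubmodule (H := H) S := fun x => ⟨V x, hmap x x.2⟩
  have hadd : ∀ x y : CEsubmodule (H := H) S, Vb (x + y) = Vb x + Vb y :=
    (isQuasiNorm_CEnorm S).map_add_of_isometry Vb
      (fun y => let ⟨x, hx, hVx⟩ := hVsurj y y.2; ⟨⟨x, hx⟩, Subtype.ext hVx⟩)
      (fun x y => hdist x x.2 y y.2)
      (fun x => Subtype.ext <| show V ((2 : ℝ) • (x : H →L[ℂ] H)) = (2 : ℝ) • V x by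
        simpa only [← Complex.coe_smul, Complex.ofReal_ofNat] using hsmul 2 x x.2)
  exact ⟨hmap, hVsurj, fun x hx y hy => congrArg Subtype.val (hadd ⟨x, hx⟩ ⟨y, hy⟩), hsmul,
    hnorm⟩

/-- Every surjective 2-local isometry `V` of a perfect Banach symmetric
ideal `C_E ≠ C_2` is a (complex-)linear surjective isometry of `C_E`. -/
theorem two_local_isometry_is_linear
    {H : Type*} [NormedAddCommGroup H] [InnerProductSpace ℂ H] [CompleteSpace H]
    [TopologicalSpace.SeparableSpace H] (hinf : ¬ FiniteDimensional ℂ H)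
    (S : BanachSymmSeqSpace) (hc0 : S.SubsetC0) (hF : S.Fatou)
    (hne : S.carrier ≠ ellTwo)
    (V : (H →L[ℂ] H) → (H →L[ℂ] H))
    (hVsurj : ∀ y ∈ CE (H := H) S, ∃ x ∈ CE (H := H) S, V x = y)
    (h2loc : ∀ x ∈ CE (H := H) S, ∀ y ∈ CE (H := H) S,
      ∃ W : (H →L[ℂ] H) → (H →L[ℂ] H), SurjLinearIsomOn S W ∧ V x = W x ∧ V y = W y) :
    SurjLinearIsomOn S V :=
  two_local_isometry_is_linear_general S V hVsurj h2loc
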